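/- arXiv:2602.11723 — 4 statements merged into one kernel-verified Lean document; each statement's English description precedes it below -/
import Mathlib

section
/- Simple pole and residue of the resolvent of a rank-one operator: Let E be a complex Banach space, a ∈ E, b a continuous linear functional on E with b(a) ≠ 0, and S := a⊗b. Then, as λ → b(a) with λ ≠ b(a), the operators (λ - b(a)) • (λ•I - S)⁻¹ converge in operator norm to b(a)⁻¹ • (a⊗b); in particular, if b(a) = 1 the limit is the rank-one projection a⊗b. (Here (λ•I - S)⁻¹ is the inverse of λ•I - S, which exists for all λ in a punctured neighborhood of b(a).) -/
/-!
An operator `p` with `p * p = c • p` behaves like `c` times an idempotent, so its resolvent is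
explicit: `(lam • 1 - p)⁻¹ = lam⁻¹ • 1 + (lam * (lam - c))⁻¹ • p` for `lam ∉ {0, c}`. Multiplying
by `lam - c` gives `((lam - c) / lam) • 1 + lam⁻¹ • p`, which tends to `c⁻¹ • p` as `lam → c`.
The rank-one operator `a⊗b` satisfies this identity with `c = b a`.
-/

open Topology Filter

section ScaledIdempotent

variable {𝕜 A : Type*} [Ring A] {p : A} {c lam : 𝕜}

section Algebraic

variable [Field 𝕜] [Algebra 𝕜 A]

theorem smul_one_sub_mul_smul_one_add_smul_eq_one (hp : p * p = c • p) (h0 : lam ≠ 0) (hc : lam ≠ c) :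
    (lam • 1 - p) * (lam⁻¹ • 1 + (lam * (lam - c))⁻¹ • p) = 1 := by
  have expand : (lam • 1 - p) * (lam⁻¹ • 1 + (lam * (lam - c))⁻¹ • p) =
      (lam * lam⁻¹) • 1 + ((lam - c) * (lam * (lam - c))⁻¹ - lam⁻¹) • p := by
    simp only [sub_mul, mul_add, mul_smul_comm, smul_mul_assoc, hp, one_mul, mul_one]
    module
  have hcoeff : (lam - c) * (lam * (lam - c))⁻¹ - lam⁻¹ = 0 := by
    field_simp [sub_ne_zero.mpr hc]
    ring
  rw [expand, hcoeff, mul_inv_cancel₀ h0, one_smul, zero_smul, add_zero]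

def Units.smulOneSubOfMulSelfEqSmul (hp : p * p = c • p) (h0 : lam ≠ 0) (hc : lam ≠ c) : Aˣ where
  val := lam • 1 - p
  inv := lam⁻¹ • 1 + (lam * (lam - c))⁻¹ • p
  val_inv := smul_one_sub_mul_smul_one_add_smul_eq_one hp h0 hc
  inv_val := by
    have hcomm : Commute (lam • (1 : A) - p) (lam⁻¹ • 1 + (lam * (lam - c))⁻¹ • p) :=
      ((Commute.one_left _).smul_left _).sub_left
        (((Commute.one_right _).smul_right _).add_right ((Commute.refl p).smul_right _))
    rw [← hcomm.eq]
    exact smul_one_sub_mul_smul_one_add_smul_eq_one hp h0 hc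

theorem isUnit_smul_one_sub_of_mul_self_eq_smul (hp : p * p = c • p) (h0 : lam ≠ 0)
    (hc : lam ≠ c) : IsUnit (lam • 1 - p) :=
  (Units.smulOneSubOfMulSelfEqSmul hp h0 hc).isUnit

theorem ring_inverse_smul_one_sub_of_mul_self_eq_smul (hp : p * p = c • p) (h0 : lam ≠ 0)
    (hc : lam ≠ c) :
    Ring.inverse (lam • 1 - p) = lam⁻¹ • 1 + (lam * (lam - c))⁻¹ • p :=
  Ring.inverse_unit (Units.smulOneSubOfMulSelfEqSmul hp h0 hc)

theorem eventually_isUnit_smul_one_sub_of_mul_self_eq_smul [TopologicalSpace 𝕜] [T1Space 𝕜]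
    (hp : p * p = c • p) (hc : c ≠ 0) : ∀ᶠ lam in 𝓝[≠] c, IsUnit (lam • 1 - p) := by
  filter_upwards [self_mem_nhdsWithin, eventually_ne_nhdsWithin hc] with lam hlam_c hlam_0
  exact isUnit_smul_one_sub_of_mul_self_eq_smul hp hlam_0 hlam_c

end Algebraic

variable [NormedField 𝕜] [Algebra 𝕜 A]

theorem tendsto_sub_smul_ring_inverse_smul_one_sub_of_mul_self_eq_smul [TopologicalSpace A]
    [ContinuousAdd A] [ContinuousSMul 𝕜 A] (hp : p * p = c • p) (hc : c ≠ 0) :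
    Tendsto (fun lam : 𝕜 => (lam - c) • Ring.inverse (lam • (1 : A) - p)) (𝓝[≠] c)
      (𝓝 (c⁻¹ • p)) := by
  have hresolvent : (fun lam : 𝕜 => (lam - c) • Ring.inverse (lam • (1 : A) - p)) =ᶠ[𝓝[≠] c]
      fun lam => ((lam - c) * lam⁻¹) • 1 + lam⁻¹ • p := by
    filter_upwards [self_mem_nhdsWithin, eventually_ne_nhdsWithin hc] with lam hlam_c hlam_0
    rw [ring_inverse_smul_one_sub_of_mul_self_eq_smul hp hlam_0 hlam_c, smul_add, smul_smul,
      smul_smul]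
    congr 2
    field_simp [sub_ne_zero.mpr hlam_c]
  have hlim : Tendsto (fun lam : 𝕜 => ((lam - c) * lam⁻¹) • (1 : A) + lam⁻¹ • p) (𝓝 c)
      (𝓝 (((c - c) * c⁻¹) • 1 + c⁻¹ • p)) :=
    (((tendsto_id.sub_const c).mul (tendsto_inv₀ hc)).smul_const _).add
      ((tendsto_inv₀ hc).smul_const _)
  rw [sub_self, zero_mul, zero_smul, zero_add] at hlim
  exact (hlim.mono_left nhdsWithin_le_nhds).congr' hresolvent.symm

end ScaledIdempotent

theorem ContinuousLinearMap.smulRight_mul_self {𝕜 E : Type*} [Field 𝕜] [TopologicalSpace 𝕜]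
    [IsTopologicalRing 𝕜] [AddCommGroup E] [Module 𝕜 E] [TopologicalSpace E] [ContinuousSMul 𝕜 E]
    (a : E) (b : E →L[𝕜] 𝕜) :
    b.smulRight a * b.smulRight a = b a • b.smulRight a := by
  ext f
  simp [smul_smul, mul_comm]

theorem residue_rank_one_resolvent_general
    {E : Type*} [NormedAddCommGroup E] [NormedSpace ℂ E]
    (a : E) (b : E →L[ℂ] ℂ) (hba : b a ≠ 0) :
    (∀ᶠ lam in 𝓝[≠] (b a), IsUnit (lam • (1 : E →L[ℂ] E) - b.smulRight a)) ∧
    Tendsto (fun lam : ℂ =>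
        (lam - b a) • Ring.inverse (lam • (1 : E →L[ℂ] E) - b.smulRight a))
      (𝓝[≠] (b a)) (𝓝 ((b a)⁻¹ • b.smulRight a)) :=
  ⟨eventually_isUnit_smul_one_sub_of_mul_self_eq_smul (b.smulRight_mul_self a) hba,
    tendsto_sub_smul_ring_inverse_smul_one_sub_of_mul_self_eq_smul (b.smulRight_mul_self a) hba⟩

/-- Simple pole and residue of the resolvent of the rank-one operator `S = a⊗b`
(where `(a⊗b) f = b f • a`): if `b a ≠ 0`, then `λ•I - S` is invertible for all `λ`
in a punctured neighborhood of `b a`, and `(λ - b a) • (λ•I - S)⁻¹` converges in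
operator norm to `(b a)⁻¹ • (a⊗b)` as `λ → b a`, `λ ≠ b a`. -/
theorem residue_rank_one_resolvent
    {E : Type*} [NormedAddCommGroup E] [NormedSpace ℂ E] [CompleteSpace E]
    (a : E) (b : E →L[ℂ] ℂ) (hba : b a ≠ 0) :
    (∀ᶠ lam in 𝓝[≠] (b a), IsUnit (lam • (1 : E →L[ℂ] E) - b.smulRight a)) ∧
    Tendsto (fun lam : ℂ =>
        (lam - b a) • Ring.inverse (lam • (1 : E →L[ℂ] E) - b.smulRight a))
      (𝓝[≠] (b a)) (𝓝 ((b a)⁻¹ • b.smulRight a)) :=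
  residue_rank_one_resolvent_general a b hba
end

section
/- Eigenvalue characterization via the Birman–Schwinger function: Let E be a complex Banach space, R : E → E a bounded linear operator, u0 ∈ E, Φ a continuous linear functional on E, α ∈ ℂ with α ≠ 0, and T := α • (u0⊗Φ) + R. Suppose λ ∈ ℂ is such that λ•I - R is invertible with inverse Rλ and Rλ u0 ≠ 0. Then λ is an eigenvalue of T (i.e. there exists f ≠ 0 with T f = λ • f) if and only if α·Φ(Rλ u0) = 1, i.e. D(λ) := 1 - α·Φ(Rλ u0) = 0. -/
/-- Eigenvalue characterization via the Birman–Schwinger function: for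
`T = α • (u0⊗Φ) + R` with `α ≠ 0` (where `(a⊗b) f = b f • a`), if `λ•I - R` is
invertible with inverse `Rλ` and `Rλ u0 ≠ 0`, then `λ` is an eigenvalue of `T`
iff `α·Φ(Rλ u0) = 1`, i.e. iff `D(λ) := 1 - α·Φ(Rλ u0) = 0`. -/
theorem eigenvalue_iff_birman_schwinger_zero
    {E : Type*} [NormedAddCommGroup E] [NormedSpace ℂ E] [CompleteSpace E]
    (R : E →L[ℂ] E) (u0 : E) (Φ : E →L[ℂ] ℂ) (α : ℂ) (hα : α ≠ 0)
    (T : E →L[ℂ] E) (hT : T = α • Φ.smulRight u0 + R)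
    (lam : ℂ) (Rlam : E →L[ℂ] E)
    (hinv₁ : (lam • (1 : E →L[ℂ] E) - R).comp Rlam = 1)
    (hinv₂ : Rlam.comp (lam • (1 : E →L[ℂ] E) - R) = 1)
    (hu : Rlam u0 ≠ 0) :
    (∃ f : E, f ≠ 0 ∧ T f = lam • f) ↔ α * Φ (Rlam u0) = 1 := by
  subst hT
  constructor
  · rintro ⟨f, hf, hfe⟩
    have h1 : (lam • (1 : E →L[ℂ] E) - R) f = (α * Φ f) • u0 := by
      have h0 : α • (Φ f • u0) + R f = lam • f := by
        simpa [ContinuousLinearMap.add_apply, ContinuousLinearMap.smul_apply,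
          ContinuousLinearMap.smulRight_apply] using hfe
      simp only [ContinuousLinearMap.sub_apply, ContinuousLinearMap.smul_apply,
        ContinuousLinearMap.one_apply, mul_smul]
      rw [← h0]; abel
    have hc : Rlam ((lam • (1 : E →L[ℂ] E) - R) f) = f := by
      have := congrArg (fun g => g f) hinv₂
      simpa [ContinuousLinearMap.comp_apply] using this
    have h2 : f = (α * Φ f) • Rlam u0 := by
      conv_lhs => rw [← hc, h1]
      rw [map_smul]
    have hΦf : Φ f ≠ 0 := by
      intro h
      apply hf
      rw [h2, h, mul_zero, zero_smul]
    have h3 : Φ f = (α * Φ f) * Φ (Rlam u0) := by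
      conv_lhs => rw [h2]
      simp [mul_comm]
    exact mul_left_cancel₀ hΦf (by rw [mul_one]; linear_combination h3.symm)
  · intro hD
    refine ⟨Rlam u0, hu, ?_⟩
    have h1 : lam • Rlam u0 - R (Rlam u0) = u0 := by
      have := congrArg (fun g => g u0) hinv₁
      simpa [ContinuousLinearMap.comp_apply, ContinuousLinearMap.sub_apply,
        ContinuousLinearMap.smul_apply, ContinuousLinearMap.one_apply] using this
    have h2 : α • (Φ (Rlam u0) • u0) = u0 := by
      rw [smul_smul, hD, one_smul]
    calc (α • Φ.smulRight u0 + R) (Rlam u0)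
        = α • (Φ (Rlam u0) • u0) + R (Rlam u0) := by
          simp [ContinuousLinearMap.add_apply, ContinuousLinearMap.smul_apply,
            ContinuousLinearMap.smulRight_apply]
      _ = u0 + R (Rlam u0) := by rw [h2]
      _ = lam • Rlam u0 := by nth_rewrite 1 [← h1]; abel
end

section
/- Residue of the resolvent at a simple zero of the Birman–Schwinger function: Let E be a complex Banach space, R : E → E a bounded linear operator, u0 ∈ E, Φ a continuous linear functional on E, α ∈ ℂ, and T := α • (u0⊗Φ) + R. Suppose λ0 ∈ ℂ is such that λ0•I - R is invertible with inverse Rλ0, that D(λ0) = 0 where D(λ) := 1 - α·Φ((λ•I - R)⁻¹ u0), and that D has nonzero derivative d := D'(λ0) ≠ 0 at λ0. Then, as λ → λ0 with λ ≠ λ0, the operators (λ - λ0) • (λ•I - T)⁻¹ converge in operator norm to the rank-one operator (α / d) • ((Rλ0 u0) ⊗ (Φ ∘ Rλ0)), where (Rλ0 u0) ⊗ (Φ ∘ Rλ0) is the map f ↦ Φ(Rλ0 f) • (Rλ0 u0). (In particular (λ•I - T)⁻¹ exists for all λ ≠ λ0 in some punctured neighborhood of λ0.) -/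
/-!
Off the spectrum of `R`, the Sherman–Morrison formula inverts the rank-one perturbation:
`(λ - T)⁻¹ = Rλ + (α / D λ) • (Φ ∘ Rλ) ⊗ (Rλ u0)`. Multiplying by `λ - λ0` kills the first
term, which stays bounded, while `(λ - λ0) / D λ → 1 / D'(λ0)` because `D` has a simple zero
at `λ0`, and the rank-one factor converges since the resolvent `λ ↦ Rλ` is continuous at `λ0`.
-/

open Topology Filter

namespace ContinuousLinearMap

section ShermanMorrison

variable {𝕜 E : Type*} [CommRing 𝕜] [TopologicalSpace 𝕜]
  [AddCommGroup E] [Module 𝕜 E] [TopologicalSpace E] [IsTopologicalAddGroup E]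
  [ContinuousSMul 𝕜 E] (φ : E →L[𝕜] 𝕜) (u : E) {a s : E →L[𝕜] E} {α c : 𝕜}

theorem sub_smul_smulRight_mul_eq_one (h : a * s = 1) (hc : c * (1 - α * φ (s u)) = α) :
    (a - α • φ.smulRight u) * (s + c • (φ.comp s).smulRight (s u)) = 1 := by
  have has (x : E) : a (s x) = x := by simpa using congr($h x)
  ext f
  simp only [mul_apply_eq_comp, add_apply, smul_apply, smulRight_apply, comp_apply, sub_apply,
    map_add, map_smul, one_apply_eq_self, has]
  match_scalars
  · ring
  · linear_combination φ (s f) * hc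

theorem add_smul_smulRight_mul_sub_eq_one (h : s * a = 1) (hc : c * (1 - α * φ (s u)) = α) :
    (s + c • (φ.comp s).smulRight (s u)) * (a - α • φ.smulRight u) = 1 := by
  have hsa (x : E) : s (a x) = x := by simpa using congr($h x)
  ext f
  simp only [mul_apply_eq_comp, add_apply, smul_apply, smulRight_apply, comp_apply, sub_apply,
    map_smul, map_sub, one_apply_eq_self, hsa]
  match_scalars
  · ring
  · linear_combination φ f * hc

end ShermanMorrison

section ShermanMorrisonInverse

variable {𝕜 E : Type*} [Field 𝕜] [TopologicalSpace 𝕜]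
  [AddCommGroup E] [Module 𝕜 E] [TopologicalSpace E] [IsTopologicalAddGroup E]
  [ContinuousSMul 𝕜 E] (φ : E →L[𝕜] 𝕜) (u : E) {a : E →L[𝕜] E} (α : 𝕜)

theorem isUnit_sub_smul_smulRight_and_inverse_eq (ha : IsUnit a)
    (hD : 1 - α * φ (Ring.inverse a u) ≠ 0) :
    IsUnit (a - α • φ.smulRight u) ∧
      Ring.inverse (a - α • φ.smulRight u) = Ring.inverse a +
        (α / (1 - α * φ (Ring.inverse a u))) •
          (φ.comp (Ring.inverse a)).smulRight (Ring.inverse a u) := by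
  have hc : α / (1 - α * φ (Ring.inverse a u)) * (1 - α * φ (Ring.inverse a u)) = α :=
    div_mul_cancel₀ α hD
  let v : (E →L[𝕜] E)ˣ :=
    ⟨_, _, sub_smul_smulRight_mul_eq_one φ u (Ring.mul_inverse_cancel a ha) hc,
      add_smul_smulRight_mul_sub_eq_one φ u (Ring.inverse_mul_cancel a ha) hc⟩
  exact ⟨v.isUnit, Ring.inverse_unit v⟩

end ShermanMorrisonInverse

theorem continuous_comp_smulRight_apply {𝕜 E : Type*} [NontriviallyNormedField 𝕜]
    [NormedAddCommGroup E] [NormedSpace 𝕜 E] (φ : E →L[𝕜] 𝕜) (u : E) :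
    Continuous fun s : E →L[𝕜] E => (φ.comp s).smulRight (s u) :=
  (smulRightL 𝕜 E E).continuous₂.comp₂ (compL 𝕜 E E 𝕜 φ).continuous (apply 𝕜 E u).continuous

end ContinuousLinearMap

theorem HasDerivAt.tendsto_sub_div_of_eq_zero {𝕜 : Type*} [NontriviallyNormedField 𝕜]
    {f : 𝕜 → 𝕜} {d x : 𝕜} (hf : HasDerivAt f d x) (hx : f x = 0) (hd : d ≠ 0) :
    Tendsto (fun y => (y - x) / f y) (𝓝[≠] x) (𝓝 d⁻¹) := by
  refine ((hasDerivAt_iff_tendsto_slope.mp hf).inv₀ hd).congr fun y => ?_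
  rw [slope_def_field, hx, sub_zero, inv_div]

/-- Residue of the resolvent at a simple zero of the Birman–Schwinger function
`D(λ) := 1 - α·Φ((λ•I - R)⁻¹ u0)`: for `T = α • (u0⊗Φ) + R` (where
`(a⊗b) f = b f • a`), if `λ0•I - R` is invertible with inverse `Rλ0`,
`D(λ0) = 0`, and `D` has nonzero derivative `d` at `λ0`, then `λ•I - T` is
invertible for all `λ ≠ λ0` in a punctured neighborhood of `λ0` and
`(λ - λ0) • (λ•I - T)⁻¹` converges in operator norm to
`(α / d) • ((Rλ0 u0) ⊗ (Φ ∘ Rλ0))` as `λ → λ0`, `λ ≠ λ0`. -/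
theorem residue_at_simple_zero_birman_schwinger
    {E : Type*} [NormedAddCommGroup E] [NormedSpace ℂ E] [CompleteSpace E]
    (R : E →L[ℂ] E) (u0 : E) (Φ : E →L[ℂ] ℂ) (α : ℂ)
    (T : E →L[ℂ] E) (hT : T = α • Φ.smulRight u0 + R)
    (lam0 : ℂ) (Rlam0 : E →L[ℂ] E)
    (hinv₁ : (lam0 • (1 : E →L[ℂ] E) - R).comp Rlam0 = 1)
    (hinv₂ : Rlam0.comp (lam0 • (1 : E →L[ℂ] E) - R) = 1)
    (hD0 : 1 - α * Φ (Rlam0 u0) = 0)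
    (d : ℂ) (hd : d ≠ 0)
    (hD' : HasDerivAt
      (fun lam : ℂ => 1 - α * Φ (Ring.inverse (lam • (1 : E →L[ℂ] E) - R) u0))
      d lam0) :
    (∀ᶠ lam in 𝓝[≠] lam0, IsUnit (lam • (1 : E →L[ℂ] E) - T)) ∧
    Tendsto (fun lam : ℂ =>
        (lam - lam0) • Ring.inverse (lam • (1 : E →L[ℂ] E) - T))
      (𝓝[≠] lam0)
      (𝓝 ((α / d) • (Φ.comp Rlam0).smulRight (Rlam0 u0))) := by
  set A : ℂ → E →L[ℂ] E := fun lam => lam • 1 - R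
  set S : ℂ → E →L[ℂ] E := fun lam => Ring.inverse (A lam)
  set D : ℂ → ℂ := fun lam => 1 - α * Φ (S lam u0)
  set K : (E →L[ℂ] E) → E →L[ℂ] E := fun s => (Φ.comp s).smulRight (s u0)
  let A0 : (E →L[ℂ] E)ˣ := ⟨A lam0, Rlam0, hinv₁, hinv₂⟩
  have hA : Continuous A := by fun_prop
  have hS0 : S lam0 = Rlam0 := Ring.inverse_unit A0
  have hS : Tendsto S (𝓝 lam0) (𝓝 Rlam0) :=
    hS0 ▸ (NormedRing.inverse_continuousAt A0).tendsto.comp hA.continuousAt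
  have hgood : ∀ᶠ lam in 𝓝[≠] lam0, IsUnit (A lam) ∧ D lam ≠ 0 :=
    (eventually_nhdsWithin_of_eventually_nhds
      (hA.continuousAt.eventually (Units.isOpen.mem_nhds A0.isUnit))).and
      (hD'.eventually_ne hd)
  have hTA (lam : ℂ) : lam • 1 - T = A lam - α • Φ.smulRight u0 := by
    rw [hT, sub_add_eq_sub_sub, sub_right_comm]
  have hSM (lam : ℂ) (h : IsUnit (A lam) ∧ D lam ≠ 0) :
      IsUnit (lam • 1 - T) ∧ Ring.inverse (lam • 1 - T) = S lam + (α / D lam) • K (S lam) :=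
    hTA lam ▸ Φ.isUnit_sub_smul_smulRight_and_inverse_eq u0 α h.1 h.2
  refine ⟨hgood.mono fun lam h => (hSM lam h).1, ?_⟩
  have hK : Tendsto (fun lam => K (S lam)) (𝓝[≠] lam0) (𝓝 (K Rlam0)) :=
    (((Φ.continuous_comp_smulRight_apply u0).tendsto Rlam0).comp hS).mono_left nhdsWithin_le_nhds
  have hres : Tendsto (fun lam => (lam - lam0) • S lam) (𝓝[≠] lam0) (𝓝 0) := by
    simpa using ((tendsto_id.sub_const lam0).smul hS).mono_left nhdsWithin_le_nhds
  have hD : Tendsto (fun lam => (lam - lam0) / D lam) (𝓝[≠] lam0) (𝓝 d⁻¹) :=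
    hD'.tendsto_sub_div_of_eq_zero (by simpa [D, hS0] using hD0) hd
  have hlim := hres.add ((tendsto_const_nhds (x := α)).mul hD |>.smul hK)
  rw [zero_add, ← div_eq_mul_inv] at hlim
  refine hlim.congr' (hgood.mono fun lam h => ?_)
  dsimp only
  rw [(hSM lam h).2, smul_add, smul_smul, mul_div_left_comm]
end

section
/- Perron–Frobenius under discrete Doeblin minorization (existence): Let n be a nonempty finite index type and A an n×n real matrix with nonnegative entries. Suppose there exist α > 0 and vectors u, g : n → ℝ with u i > 0 and g j > 0 for all i, j, such that A i j ≥ α · u i · g j for all i, j. Then there exist a real number r > 0 and a vector w : n → ℝ with w i > 0 for all i such that A *ᵥ w = r • w, and every eigenvalue μ ∈ ℂ of A (i.e. every element of the spectrum of the complexified matrix Aℂ) satisfies ‖μ‖ ≤ r; that is, r is the spectral radius of A and is a positive eigenvalue with a strictly positive eigenvector. -/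
/-!
The minorization makes `A` entrywise positive. For a positive matrix, the Collatz–Wielandt
function `x ↦ minᵢ (A x)ᵢ / xᵢ` is continuous on the image of the standard simplex under `A`,
so it attains a maximum `r` at some `w = A x`. Then `r w ≤ A w`, and if this inequality were
not an equality, applying the positive matrix `A` once more would make it strict in every
coordinate, so `A w` would have a larger Collatz–Wielandt value than `w`. Finally, for an
eigenpair `(μ, z)`, comparing `|z|` with `w` at an index maximizing `|zᵢ| / wᵢ` gives `|μ| ≤ r`.
-/

open scoped Matrix

namespace Matrix

variable {n : Type*} [Fintype n]

theorem mulVec_pos_of_pos {R : Type*} [Semiring R] [PartialOrder R] [IsStrictOrderedRing R]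
    {A : Matrix n n R} (hA : ∀ i j, 0 < A i j) {x : n → R}
    (hx : 0 ≤ x) (hx₀ : x ≠ 0) (i : n) : 0 < (A *ᵥ x) i := by
  obtain ⟨j, hj⟩ := Function.ne_iff.1 hx₀
  exact Finset.sum_pos' (fun k _ => mul_nonneg (hA i k).le (hx k))
    ⟨j, Finset.mem_univ j, mul_pos (hA i j) (lt_of_le_of_ne (hx j) (Ne.symm hj))⟩

theorem mulVec_pos_of_mem_stdSimplex {A : Matrix n n ℝ} (hA : ∀ i j, 0 < A i j) {x : n → ℝ}
    (hx : x ∈ stdSimplex ℝ n) (i : n) : 0 < (A *ᵥ x) i := by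
  refine mulVec_pos_of_pos hA hx.1 (fun h => ?_) i
  simpa [h] using hx.2

theorem lt_mulVec_mulVec_of_le_mulVec {A : Matrix n n ℝ} (hA : ∀ i j, 0 < A i j)
    {r : ℝ} {w : n → ℝ} (hle : ∀ i, r * w i ≤ (A *ᵥ w) i) (hne : A *ᵥ w ≠ r • w) (i : n) :
    r * (A *ᵥ w) i < (A *ᵥ (A *ᵥ w)) i := by
  have hgap : 0 ≤ A *ᵥ w - r • w := fun j => by simpa using hle j
  have := mulVec_pos_of_pos hA hgap (sub_ne_zero.2 hne) i
  simpa [mulVec_sub, mulVec_smul] using this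

theorem norm_le_of_mulVec_eq_smul {𝕜 : Type*} [NormedDivisionRing 𝕜] {B : Matrix n n 𝕜}
    {A : Matrix n n ℝ} (hBA : ∀ i j, ‖B i j‖ ≤ A i j) {r : ℝ} {w : n → ℝ}
    (hw : ∀ i, 0 < w i) (hAw : ∀ i, (A *ᵥ w) i ≤ r * w i)
    {μ : 𝕜} {z : n → 𝕜} (hz : z ≠ 0) (hμ : B *ᵥ z = μ • z) : ‖μ‖ ≤ r := by
  obtain ⟨i₀, hi₀⟩ := Function.ne_iff.1 hz
  obtain ⟨k, -, hk⟩ := Finset.exists_max_image Finset.univ (fun i => ‖z i‖ / w i)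
    ⟨i₀, Finset.mem_univ i₀⟩
  set c := ‖z k‖ / w k
  have hzc : ∀ j, ‖z j‖ ≤ c * w j := fun j =>
    (div_le_iff₀ (hw j)).1 (hk j (Finset.mem_univ j))
  have hzk : ‖z k‖ = c * w k := (div_mul_cancel₀ _ (hw k).ne').symm
  have hc : 0 < c :=
    (div_pos (norm_pos_iff.2 hi₀) (hw i₀)).trans_le (hk i₀ (Finset.mem_univ i₀))
  have hA : ∀ i j, 0 ≤ A i j := fun i j => (norm_nonneg _).trans (hBA i j)
  refine le_of_mul_le_mul_right ?_ (hzk ▸ mul_pos hc (hw k))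
  calc ‖μ‖ * ‖z k‖ = ‖(B *ᵥ z) k‖ := by rw [hμ, Pi.smul_apply, smul_eq_mul, norm_mul]
    _ ≤ ∑ j, ‖B k j‖ * ‖z j‖ := (norm_sum_le _ _).trans_eq (by simp only [norm_mul])
    _ ≤ ∑ j, A k j * (c * w j) := Finset.sum_le_sum fun j _ =>
        mul_le_mul (hBA k j) (hzc j) (norm_nonneg _) (hA k j)
    _ = c * (A *ᵥ w) k := by
        simp only [mulVec, dotProduct, Finset.mul_sum]
        exact Finset.sum_congr rfl fun j _ => by ring
    _ ≤ c * (r * w k) := mul_le_mul_of_nonneg_left (hAw k) hc.le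
    _ = r * ‖z k‖ := by rw [hzk]; ring

theorem exists_mulVec_eq_smul_of_mem_spectrum {K : Type*} [Field K] [DecidableEq n]
    {M : Matrix n n K} {μ : K} (hμ : μ ∈ spectrum K M) : ∃ z ≠ 0, M *ᵥ z = μ • z := by
  rw [← spectrum_toLin', ← Module.End.hasEigenvalue_iff_mem_spectrum] at hμ
  obtain ⟨z, hz⟩ := hμ.exists_hasEigenvector
  exact ⟨z, hz.2, by simpa using hz.apply_eq_smul⟩

variable [Nonempty n]

/-- Only meaningful for vectors with positive entries: a zero entry contributes the junk
quotient `(A *ᵥ x) i / 0 = 0`. -/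
noncomputable def collatzWielandt (A : Matrix n n ℝ) (x : n → ℝ) : ℝ :=
  Finset.univ.inf' Finset.univ_nonempty fun i => (A *ᵥ x) i / x i

theorem le_collatzWielandt_iff {A : Matrix n n ℝ} {x : n → ℝ} (hx : ∀ i, 0 < x i) {r : ℝ} :
    r ≤ collatzWielandt A x ↔ ∀ i, r * x i ≤ (A *ᵥ x) i := by
  simp [collatzWielandt, Finset.le_inf'_iff, le_div_iff₀ (hx _)]

theorem lt_collatzWielandt_iff {A : Matrix n n ℝ} {x : n → ℝ} (hx : ∀ i, 0 < x i) {r : ℝ} :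
    r < collatzWielandt A x ↔ ∀ i, r * x i < (A *ᵥ x) i := by
  simp [collatzWielandt, Finset.lt_inf'_iff, lt_div_iff₀ (hx _)]

theorem collatzWielandt_smul (A : Matrix n n ℝ) (x : n → ℝ) {c : ℝ} (hc : c ≠ 0) :
    collatzWielandt A (c • x) = collatzWielandt A x := by
  simp only [collatzWielandt, mulVec_smul, Pi.smul_apply, smul_eq_mul,
    mul_div_mul_left _ _ hc]

theorem continuousOn_collatzWielandt (A : Matrix n n ℝ) :
    ContinuousOn (collatzWielandt A) {x | ∀ i, x i ≠ 0} := by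
  unfold collatzWielandt
  exact ContinuousOn.finset_inf'_apply _ fun i _ =>
    ContinuousOn.div (by fun_prop) (by fun_prop) fun _ hx => hx i

theorem inv_sum_smul_mem_stdSimplex {x : n → ℝ} (hx : ∀ i, 0 < x i) :
    (∑ i, x i)⁻¹ • x ∈ stdSimplex ℝ n := by
  have hsum : 0 < ∑ i, x i := Finset.sum_pos (fun i _ => hx i) Finset.univ_nonempty
  refine ⟨fun i => by simpa using mul_nonneg (inv_nonneg.2 hsum.le) (hx i).le, ?_⟩
  simp [← Finset.mul_sum, hsum.ne']

theorem exists_pos_eigenvector_of_pos {A : Matrix n n ℝ} (hA : ∀ i j, 0 < A i j) :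
    ∃ r : ℝ, 0 < r ∧ ∃ w : n → ℝ, (∀ i, 0 < w i) ∧ A *ᵥ w = r • w := by
  have hcont : ContinuousOn (fun x => collatzWielandt A (A *ᵥ x)) (stdSimplex ℝ n) :=
    (continuousOn_collatzWielandt A).comp
      (continuous_const.matrix_mulVec continuous_id).continuousOn
      fun x hx i => (mulVec_pos_of_mem_stdSimplex hA hx i).ne'
  obtain ⟨x, hx, hmax⟩ := (isCompact_stdSimplex ℝ n).exists_isMaxOn
    ⟨_, inv_sum_smul_mem_stdSimplex (x := fun _ => 1) fun _ => one_pos⟩ hcont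
  set w := A *ᵥ x
  have hw : ∀ i, 0 < w i := mulVec_pos_of_mem_stdSimplex hA hx
  have hAw : ∀ i, 0 < (A *ᵥ w) i := mulVec_pos_of_pos hA (fun j => (hw j).le)
    (Function.ne_iff.2 ⟨Classical.arbitrary n, (hw _).ne'⟩)
  set r := collatzWielandt A w
  have hrw : ∀ i, r * w i ≤ (A *ᵥ w) i := (le_collatzWielandt_iff hw).1 le_rfl
  refine ⟨r, (lt_collatzWielandt_iff hw).2 fun i => by simpa using hAw i, w, hw, ?_⟩
  by_contra hne
  have hbetter : r < collatzWielandt A (A *ᵥ w) :=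
    (lt_collatzWielandt_iff hAw).2 (lt_mulVec_mulVec_of_le_mulVec hA hrw hne)
  have hsum : (∑ i, w i)⁻¹ ≠ 0 :=
    inv_ne_zero (Finset.sum_pos (fun i _ => hw i) Finset.univ_nonempty).ne'
  have hle := hmax (inv_sum_smul_mem_stdSimplex hw)
  simp only [Set.mem_ofPred_eq, mulVec_smul, collatzWielandt_smul _ _ hsum] at hle
  exact hle.not_gt hbetter

end Matrix

theorem perron_frobenius_doeblin_existence_general
    {n : Type*} [Fintype n] [DecidableEq n] [Nonempty n]
    (A : Matrix n n ℝ)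
    (α : ℝ) (hα : 0 < α) (u g : n → ℝ)
    (hu : ∀ i, 0 < u i) (hg : ∀ j, 0 < g j)
    (hmin : ∀ i j, α * u i * g j ≤ A i j) :
    ∃ r : ℝ, 0 < r ∧ ∃ w : n → ℝ, (∀ i, 0 < w i) ∧
      A *ᵥ w = r • w ∧
      ∀ μ ∈ spectrum ℂ (A.map (Complex.ofReal ·)), ‖μ‖ ≤ r := by
  have hA : ∀ i j, 0 < A i j := fun i j =>
    (mul_pos (mul_pos hα (hu i)) (hg j)).trans_le (hmin i j)
  obtain ⟨r, hr, w, hw, hAw⟩ := Matrix.exists_pos_eigenvector_of_pos hA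
  refine ⟨r, hr, w, hw, hAw, fun μ hμ => ?_⟩
  obtain ⟨z, hz, hzμ⟩ := Matrix.exists_mulVec_eq_smul_of_mem_spectrum hμ
  refine Matrix.norm_le_of_mulVec_eq_smul (A := A) (fun i j => ?_) hw (fun i => ?_) hz hzμ
  · simp [Complex.norm_real, abs_of_pos (hA i j)]
  · simp [hAw]

/-- Perron–Frobenius under discrete Doeblin minorization (existence): if `A`
is a nonnegative matrix with `A i j ≥ α · u i · g j` for some `α > 0` and
strictly positive vectors `u, g`, then there exist `r > 0` and a strictly
positive vector `w` with `A *ᵥ w = r • w`, and every eigenvalue `μ` of the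
complexified matrix satisfies `‖μ‖ ≤ r`. -/
theorem perron_frobenius_doeblin_existence
    {n : Type*} [Fintype n] [DecidableEq n] [Nonempty n]
    (A : Matrix n n ℝ) (hA : ∀ i j, 0 ≤ A i j)
    (α : ℝ) (hα : 0 < α) (u g : n → ℝ)
    (hu : ∀ i, 0 < u i) (hg : ∀ j, 0 < g j)
    (hmin : ∀ i j, α * u i * g j ≤ A i j) :
    ∃ r : ℝ, 0 < r ∧ ∃ w : n → ℝ, (∀ i, 0 < w i) ∧
      A *ᵥ w = r • w ∧
      ∀ μ ∈ spectrum ℂ (A.map (Complex.ofReal ·)), ‖μ‖ ≤ r :=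
  perron_frobenius_doeblin_existence_general A α hα u g hu hg hmin
end
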